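/- Suppose no orbit of the partition is a two-element set {x,y} with π(x) = π(y). Then for every π-stationary stochastic matrix P, the following are equivalent: GPG = P; MPM = P; BPB = P. In other words, the invariant sets 𝐆 := {P π-stationary : GPG = P}, 𝐌 := {P π-stationary : MPM = P} and 𝐁 := {P π-stationary : BPB = P} coincide. -/

import Mathlib

open Matrix Finset

/-- Total mass of the orbit (block) `i` under `π`. -/
noncomputable def orbMass {n k : ℕ} (π : Fin n → ℝ) (part : Fin n → Fin k) (i : Fin k) : ℝ :=
  ∑ z ∈ Finset.univ.filter (fun z => part z = i), π z

/-- Number of states in the orbit (block) `i`. -/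
def orbCard {n k : ℕ} (part : Fin n → Fin k) (i : Fin k) : ℕ :=
  (Finset.univ.filter (fun z => part z = i)).card

/-- The Gibbs orbit kernel. -/
noncomputable def gibbsKer {n k : ℕ} (π : Fin n → ℝ) (part : Fin n → Fin k) :
    Matrix (Fin n) (Fin n) ℝ :=
  Matrix.of fun x y => if part y = part x then π y / orbMass π part (part x) else 0

/-- The Metropolis–Hastings orbit kernel. -/
noncomputable def mhKer {n k : ℕ} (π : Fin n → ℝ) (part : Fin n → Fin k) :
    Matrix (Fin n) (Fin n) ℝ :=
  Matrix.of fun x y =>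
    if x = y then
      1 - ∑ z ∈ Finset.univ.filter (fun z => z ≠ x ∧ part z = part x),
            min 1 (π z / π x) / ((orbCard part (part x) : ℝ) - 1)
    else if part y = part x then
      min 1 (π y / π x) / ((orbCard part (part x) : ℝ) - 1)
    else 0

/-- The Barker orbit kernel. -/
noncomputable def barkerKer {n k : ℕ} (π : Fin n → ℝ) (part : Fin n → Fin k) :
    Matrix (Fin n) (Fin n) ℝ :=
  Matrix.of fun x y =>
    if x = y then
      1 - ∑ z ∈ Finset.univ.filter (fun z => z ≠ x ∧ part z = part x),
            (π z / (π x + π z)) / ((orbCard part (part x) : ℝ) - 1)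
    else if part y = part x then
      (π y / (π x + π y)) / ((orbCard part (part x) : ℝ) - 1)
    else 0

/-!
Each of the three kernels `K` is stochastic, `π`-reversible, vanishes between different orbits
and is positive between distinct points of the same orbit; moreover every orbit carries a loop or
a triangle, so `-1` is not an eigenvalue (for Metropolis–Hastings a two-point orbit has a loop
exactly when its two masses differ). Conjugated by `diag √π`, `K` becomes symmetric with spectrum
in `(-1, 1]`, so in an eigenbasis `K P K = P` forces `K P = P = P K`. By the Dirichlet form,
`K v = v` exactly when `v` is constant on orbits. Hence `K P K = P` says that the columns of `P`
are constant on orbits and its rows are proportional to `π` on orbits, a condition that does not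
depend on `K`.
-/

theorem sum_div_card_le_one {ι : Type*} {s : Finset ι} {f : ι → ℝ} (hf : ∀ i ∈ s, f i ≤ 1) :
    (∑ i ∈ s, f i) / #s ≤ 1 :=
  div_le_one_of_le₀ (by simpa using Finset.sum_le_card_nsmul s f 1 hf) (Nat.cast_nonneg _)

theorem sum_div_card_lt_one {ι : Type*} {s : Finset ι} {f : ι → ℝ} (hf : ∀ i ∈ s, f i < 1) :
    (∑ i ∈ s, f i) / #s < 1 := by
  rcases s.eq_empty_or_nonempty with rfl | hs
  · simp
  · rw [div_lt_one (by exact_mod_cast hs.card_pos)]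
    simpa using Finset.sum_lt_sum_of_nonempty hs hf

theorem Matrix.diagonal_mul_eq_self_of_diagonal_mul_mul_diagonal_eq_self {ι : Type*} [Fintype ι]
    [DecidableEq ι] {d : ι → ℝ} {R : Matrix ι ι ℝ} (hd : ∀ i, d i ∈ Set.Ioc (-1) 1)
    (h : diagonal d * R * diagonal d = R) : diagonal d * R = R ∧ R * diagonal d = R := by
  have hone : ∀ i j, R i j ≠ 0 → d i = 1 ∧ d j = 1 := by
    intro i j hR
    have hij : d i * d j = 1 := by
      have := congr_fun₂ h i j
      rw [mul_diagonal, diagonal_mul] at this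
      exact mul_right_cancel₀ hR (by linarith)
    obtain ⟨hi, hi'⟩ := hd i
    obtain ⟨hj, hj'⟩ := hd j
    constructor <;> nlinarith
  constructor <;> ext i j <;> by_cases hR : R i j = 0 <;>
    simp [diagonal_mul, mul_diagonal, hR, hone i j]

theorem Matrix.IsHermitian.mul_eq_self_of_mul_mul_eq_self {ι : Type*} [Fintype ι]
    [DecidableEq ι] {S Q : Matrix ι ι ℝ} (hS : S.IsHermitian)
    (hev : ∀ i, hS.eigenvalues i ∈ Set.Ioc (-1) 1) (h : S * Q * S = Q) :
    S * Q = Q ∧ Q * S = Q := by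
  let φ := Unitary.conjStarAlgAut ℝ (Matrix ι ι ℝ) (star hS.eigenvectorUnitary)
  have hφS : φ S = diagonal hS.eigenvalues := by
    have := hS.conjStarAlgAut_star_eigenvectorUnitary
    rwa [RCLike.ofReal_real_eq_id, Function.id_comp] at this
  have := diagonal_mul_eq_self_of_diagonal_mul_mul_diagonal_eq_self hev
    (R := φ Q) (by rw [← hφS, ← map_mul, ← map_mul, h])
  simp only [← hφS, ← map_mul] at this
  exact ⟨φ.injective this.1, φ.injective this.2⟩

theorem Matrix.mul_eq_self_of_mul_mul_eq_self_of_isHermitian_conj {ι : Type*} [Fintype ι]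
    [DecidableEq ι] {K P D D' : Matrix ι ι ℝ} (hDD' : D * D' = 1) (hD'D : D' * D = 1)
    (hS : (D * K * D').IsHermitian)
    (hev : ∀ (c : ℝ) (u : ι → ℝ), u ≠ 0 → K *ᵥ u = c • u → c ∈ Set.Ioc (-1) 1)
    (h : K * P * K = P) : K * P = P ∧ P * K = P := by
  have hconj : ∀ A B : Matrix ι ι ℝ, D * A * D' * (D * B * D') = D * (A * B) * D' := by
    intro A B
    simp only [Matrix.mul_assoc, ← Matrix.mul_assoc D' D, hD'D, Matrix.one_mul]
  have hinj : ∀ A B : Matrix ι ι ℝ, D * A * D' = D * B * D' → A = B := by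
    intro A B hAB
    simpa [Matrix.mul_assoc, ← Matrix.mul_assoc D' D, hD'D] using congr(D' * $hAB * D)
  have hSev : ∀ i, hS.eigenvalues i ∈ Set.Ioc (-1) 1 := by
    intro i
    refine hev _ (D' *ᵥ hS.eigenvectorBasis i) ?_ ?_
    · intro h0
      apply hS.eigenvectorBasis.orthonormal.ne_zero i
      simpa [mulVec_mulVec, hDD'] using congr(D *ᵥ $h0)
    · have := congr(D' *ᵥ $(hS.mulVec_eigenvectorBasis i))
      simpa [mulVec_mulVec, Matrix.mul_assoc, ← Matrix.mul_assoc D' D, hD'D, mulVec_smul] using this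
  obtain ⟨h1, h2⟩ := hS.mul_eq_self_of_mul_mul_eq_self hSev (Q := D * P * D')
    (by rw [hconj, hconj, h])
  rw [hconj] at h1 h2
  exact ⟨hinj _ _ h1, hinj _ _ h2⟩

section OrbitKernel

variable {α β : Type*} [Fintype α]

theorem sum_mul_add_mul_sq_eq {π : α → ℝ} {K : Matrix α α ℝ} (hrow : ∀ x, ∑ y, K x y = 1)
    (hstat : ∀ y, ∑ x, π x * K x y = π y) (u : α → ℝ) (ε : ℝ) :
    ∑ x, ∑ y, π x * K x y * (u x + ε * u y) ^ 2 =
      (1 + ε ^ 2) * ∑ x, π x * u x ^ 2 + 2 * ε * ∑ x, π x * u x * (K *ᵥ u) x := by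
  have hleft : ∑ x, ∑ y, π x * K x y * u x ^ 2 = ∑ x, π x * u x ^ 2 := by
    refine Finset.sum_congr rfl fun x _ => ?_
    rw [← Finset.sum_mul, ← Finset.mul_sum, hrow, mul_one]
  have hright : ∑ x, ∑ y, π x * K x y * u y ^ 2 = ∑ y, π y * u y ^ 2 := by
    rw [Finset.sum_comm]
    simp_rw [← Finset.sum_mul, hstat]
  have hcross : ∑ x, ∑ y, π x * K x y * (u x * u y) = ∑ x, π x * u x * (K *ᵥ u) x := by
    simp_rw [mulVec, dotProduct, Finset.mul_sum]
    congr! 2 with x _ y _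
    ring
  calc ∑ x, ∑ y, π x * K x y * (u x + ε * u y) ^ 2
      = ∑ x, ∑ y, π x * K x y * u x ^ 2 + ε ^ 2 * ∑ x, ∑ y, π x * K x y * u y ^ 2
          + 2 * ε * ∑ x, ∑ y, π x * K x y * (u x * u y) := by
        simp_rw [Finset.mul_sum, ← Finset.sum_add_distrib]
        congr! 2 with x _ y _
        ring
    _ = _ := by rw [hleft, hright, hcross]; ring

theorem eq_zero_of_sum_mul_sq_eq_zero {π : α → ℝ} {K : Matrix α α ℝ} (hπ : ∀ x, 0 < π x)
    (hK : ∀ x y, 0 ≤ K x y) {f : α → α → ℝ} (h : ∑ x, ∑ y, π x * K x y * f x y ^ 2 = 0)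
    {x y : α} (hxy : 0 < K x y) : f x y = 0 := by
  have hnonneg : ∀ x y, 0 ≤ π x * K x y * f x y ^ 2 := fun x y =>
    mul_nonneg (mul_nonneg (hπ x).le (hK x y)) (sq_nonneg _)
  have hterm := (Fintype.sum_eq_zero_iff_of_nonneg (fun x => Finset.sum_nonneg
    fun y _ => hnonneg x y)).mp h
  have := congr_fun ((Fintype.sum_eq_zero_iff_of_nonneg (hnonneg x)).mp (congr_fun hterm x)) y
  simpa [(hπ x).ne', hxy.ne'] using this

variable [DecidableEq β]

/-- The last field (a loop or a triangle in every orbit) rules out the eigenvalue `-1`. -/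
structure IsOrbitKernel (π : α → ℝ) (part : α → β) (K : Matrix α α ℝ) : Prop where
  nonneg : ∀ x y, 0 ≤ K x y
  sum_eq_one : ∀ x, ∑ y, K x y = 1
  eq_zero_of_part_ne : ∀ x y, part y ≠ part x → K x y = 0
  pos_of_part_eq : ∀ x y, x ≠ y → part y = part x → 0 < K x y
  reversible : ∀ x y, π x * K x y = π y * K y x
  diag_pos_or_two_lt_card : ∀ x, (∃ y, part y = part x ∧ 0 < K y y) ∨ 2 < #{z | part z = part x}

namespace IsOrbitKernel

variable {π : α → ℝ} {part : α → β} {K : Matrix α α ℝ}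

theorem stationary (hK : IsOrbitKernel π part K) (y : α) : ∑ x, π x * K x y = π y := by
  simp_rw [hK.reversible _ y, ← Finset.mul_sum, hK.sum_eq_one, mul_one]

theorem sum_mul_add_mul_sq_eq_of_mulVec_eq_smul (hK : IsOrbitKernel π part K) {u : α → ℝ}
    {c : ℝ} (hu : K *ᵥ u = c • u) (ε : ℝ) :
    ∑ x, ∑ y, π x * K x y * (u x + ε * u y) ^ 2 = (1 + ε ^ 2 + 2 * ε * c) * ∑ x, π x * u x ^ 2 := by
  have hquad : ∑ x, π x * u x * (c • u) x = c * ∑ x, π x * u x ^ 2 := by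
    rw [Finset.mul_sum]
    congr! 1 with x
    simp only [Pi.smul_apply, smul_eq_mul]
    ring
  rw [sum_mul_add_mul_sq_eq hK.sum_eq_one hK.stationary, hu, hquad]
  ring

theorem eq_zero_of_add_eq_zero (hK : IsOrbitKernel π part K) {u : α → ℝ}
    (hu : ∀ x y, 0 < K x y → u x + u y = 0) : u = 0 := by
  funext x
  show u x = 0
  obtain ⟨y, hyx, huy⟩ : ∃ y, part y = part x ∧ u y = 0 := by
    rcases hK.diag_pos_or_two_lt_card x with ⟨y, hyx, hyy⟩ | h3
    · exact ⟨y, hyx, by linarith [hu y y hyy]⟩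
    · obtain ⟨a, ha, b, hb, c, hc, hab, hac, hbc⟩ := Finset.two_lt_card.mp h3
      simp only [Finset.mem_filter, Finset.mem_univ, true_and] at ha hb hc
      have hab' := hu a b (hK.pos_of_part_eq a b hab (hb.trans ha.symm))
      have hac' := hu a c (hK.pos_of_part_eq a c hac (hc.trans ha.symm))
      have hbc' := hu b c (hK.pos_of_part_eq b c hbc (hc.trans hb.symm))
      exact ⟨a, ha, by linarith⟩
  rcases eq_or_ne x y with rfl | hxy
  · exact huy
  · linarith [hu x y (hK.pos_of_part_eq x y hxy hyx)]

theorem mem_Ioc_of_mulVec_eq_smul (hK : IsOrbitKernel π part K) (hπ : ∀ x, 0 < π x)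
    {u : α → ℝ} {c : ℝ} (hu0 : u ≠ 0) (hu : K *ᵥ u = c • u) : c ∈ Set.Ioc (-1) 1 := by
  have hnorm : 0 < ∑ x, π x * u x ^ 2 := by
    obtain ⟨x, hx⟩ := Function.ne_iff.mp hu0
    exact Finset.sum_pos' (fun x _ => by have := hπ x; positivity)
      ⟨x, Finset.mem_univ x, mul_pos (hπ x) (pow_two_pos_of_ne_zero hx)⟩
  have hform (ε : ℝ) : 0 ≤ (1 + ε ^ 2 + 2 * ε * c) * ∑ x, π x * u x ^ 2 := by
    rw [← hK.sum_mul_add_mul_sq_eq_of_mulVec_eq_smul hu ε]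
    exact Finset.sum_nonneg fun x _ => Finset.sum_nonneg fun y _ =>
      mul_nonneg (mul_nonneg (hπ x).le (hK.nonneg x y)) (sq_nonneg _)
  have hle : c ≤ 1 := by nlinarith [hform (-1)]
  refine ⟨lt_of_le_of_ne (by nlinarith [hform 1]) fun hc => hu0 ?_, hle⟩
  have h0 := hK.sum_mul_add_mul_sq_eq_of_mulVec_eq_smul hu 1
  rw [← hc] at h0
  refine hK.eq_zero_of_add_eq_zero fun x y hxy => ?_
  simpa using eq_zero_of_sum_mul_sq_eq_zero hπ hK.nonneg (f := fun x y => u x + 1 * u y)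
    (by rw [h0]; ring) hxy

theorem mulVec_eq_self_iff (hK : IsOrbitKernel π part K) (hπ : ∀ x, 0 < π x) {v : α → ℝ} :
    K *ᵥ v = v ↔ ∀ x y, part x = part y → v x = v y := by
  constructor
  · intro hv x y hxy
    rcases eq_or_ne x y with rfl | hne
    · rfl
    have h0 := hK.sum_mul_add_mul_sq_eq_of_mulVec_eq_smul (c := 1) (by rw [one_smul, hv]) (-1)
    have := eq_zero_of_sum_mul_sq_eq_zero hπ hK.nonneg (f := fun x y => v x + -1 * v y)
      (by rw [h0]; ring) (hK.pos_of_part_eq x y hne hxy.symm)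
    linarith
  · intro hv
    funext x
    calc (K *ᵥ v) x = ∑ y, K x y * v y := rfl
      _ = ∑ y, K x y * v x := by
          refine Finset.sum_congr rfl fun y _ => ?_
          by_cases hyx : part y = part x
          · rw [hv y x hyx]
          · rw [hK.eq_zero_of_part_ne x y hyx, zero_mul, zero_mul]
      _ = v x := by rw [← Finset.sum_mul, hK.sum_eq_one, one_mul]

theorem isHermitian_sqrt_conj [DecidableEq α] (hK : IsOrbitKernel π part K)
    (hπ : ∀ x, 0 < π x) :
    (diagonal (fun x => √(π x)) * K * diagonal (fun x => (√(π x))⁻¹)).IsHermitian := by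
  ext x y
  have hx := Real.sqrt_pos.mpr (hπ x)
  have hy := Real.sqrt_pos.mpr (hπ y)
  have hrev := hK.reversible x y
  rw [← Real.sq_sqrt (hπ x).le, ← Real.sq_sqrt (hπ y).le] at hrev
  simp only [conjTranspose_apply, star_trivial, mul_diagonal, diagonal_mul]
  field_simp
  linear_combination -hrev

theorem mul_eq_self_of_mul_mul_eq_self [DecidableEq α] (hK : IsOrbitKernel π part K)
    (hπ : ∀ x, 0 < π x) {P : Matrix α α ℝ} (h : K * P * K = P) : K * P = P ∧ P * K = P := by
  have hsqrt : ∀ x, √(π x) ≠ 0 := fun x => (Real.sqrt_pos.mpr (hπ x)).ne'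
  refine mul_eq_self_of_mul_mul_eq_self_of_isHermitian_conj ?_ ?_ (hK.isHermitian_sqrt_conj hπ)
    (fun c u hu0 hu => hK.mem_Ioc_of_mulVec_eq_smul hπ hu0 hu) h
  · simp [diagonal_mul_diagonal, hsqrt]
  · simp [diagonal_mul_diagonal, hsqrt]

theorem mul_eq_right_iff (hK : IsOrbitKernel π part K) (hπ : ∀ x, 0 < π x)
    {P : Matrix α α ℝ} : K * P = P ↔ ∀ y x x', part x = part x' → P x y = P x' y := by
  have hcol : K * P = P ↔ ∀ y, K *ᵥ (fun x => P x y) = fun x => P x y := by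
    simp only [← Matrix.ext_iff, funext_iff, mul_apply, mulVec, dotProduct]
    exact forall_comm
  simp only [hcol, hK.mulVec_eq_self_iff hπ]

theorem mul_eq_left_iff (hK : IsOrbitKernel π part K) (hπ : ∀ x, 0 < π x)
    {P : Matrix α α ℝ} :
    P * K = P ↔ ∀ x z z', part z = part z' → P x z / π z = P x z' / π z' := by
  have hrow (x y : α) : (P * K) x y = π y * (K *ᵥ fun z => P x z / π z) y := by
    simp only [mul_apply, mulVec, dotProduct, Finset.mul_sum]
    congr! 1 with z
    have hz := (hπ z).ne'
    field_simp
    linear_combination P x z * hK.reversible z y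
  have hcancel (x y : α) : π y * (K *ᵥ fun z => P x z / π z) y = P x y ↔
      (K *ᵥ fun z => P x z / π z) y = P x y / π y := by
    rw [eq_div_iff (hπ y).ne', mul_comm]
  simp only [← Matrix.ext_iff, hrow, hcancel, ← funext_iff (f := K *ᵥ _), hK.mulVec_eq_self_iff hπ]

theorem mul_mul_eq_self_iff [DecidableEq α] (hK : IsOrbitKernel π part K) (hπ : ∀ x, 0 < π x)
    {P : Matrix α α ℝ} :
    K * P * K = P ↔ (∀ y x x', part x = part x' → P x y = P x' y) ∧
      ∀ x z z', part z = part z' → P x z / π z = P x z' / π z' := by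
  rw [← hK.mul_eq_right_iff hπ, ← hK.mul_eq_left_iff hπ]
  exact ⟨hK.mul_eq_self_of_mul_mul_eq_self hπ, fun ⟨hKP, hPK⟩ => by rw [hKP, hPK]⟩

theorem mul_mul_eq_self_iff_of_isOrbitKernel [DecidableEq α] {L : Matrix α α ℝ}
    (hK : IsOrbitKernel π part K) (hL : IsOrbitKernel π part L) (hπ : ∀ x, 0 < π x)
    (P : Matrix α α ℝ) : K * P * K = P ↔ L * P * L = P := by
  rw [hK.mul_mul_eq_self_iff hπ, hL.mul_mul_eq_self_iff hπ]

end IsOrbitKernel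

end OrbitKernel

section GibbsMetropolisBarker

variable {n k : ℕ} {π : Fin n → ℝ} {part : Fin n → Fin k}

theorem orbMass_pos (hπ : ∀ x, 0 < π x) (x : Fin n) : 0 < orbMass π part (part x) :=
  Finset.sum_pos (fun z _ => hπ z) ⟨x, by simp⟩

theorem gibbsKer_apply (x y : Fin n) :
    gibbsKer π part x y = if part y = part x then π y / orbMass π part (part x) else 0 := rfl

theorem isOrbitKernel_gibbsKer (hπ : ∀ x, 0 < π x) : IsOrbitKernel π part (gibbsKer π part) where
  nonneg x y := by
    rw [gibbsKer_apply]
    split_ifs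
    exacts [(div_pos (hπ y) (orbMass_pos hπ x)).le, le_rfl]
  sum_eq_one x := by
    simp_rw [gibbsKer_apply]
    rw [← Finset.sum_filter, ← Finset.sum_div]
    exact div_self (orbMass_pos hπ x).ne'
  eq_zero_of_part_ne x y h := if_neg h
  pos_of_part_eq x y _ h := by
    rw [gibbsKer_apply, if_pos h]
    exact div_pos (hπ y) (orbMass_pos hπ x)
  reversible x y := by
    by_cases h : part y = part x
    · rw [gibbsKer_apply, gibbsKer_apply, if_pos h, if_pos h.symm, h]
      ring
    · rw [gibbsKer_apply, gibbsKer_apply, if_neg h, if_neg (Ne.symm h), mul_zero, mul_zero]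
  diag_pos_or_two_lt_card x := Or.inl ⟨x, rfl, by
    rw [gibbsKer_apply, if_pos rfl]
    exact div_pos (hπ x) (orbMass_pos hπ x)⟩

def otherInOrbit (part : Fin n → Fin k) (x : Fin n) : Finset (Fin n) :=
  Finset.univ.filter (fun z => z ≠ x ∧ part z = part x)

theorem mem_otherInOrbit {x z : Fin n} : z ∈ otherInOrbit part x ↔ z ≠ x ∧ part z = part x := by
  simp [otherInOrbit]

theorem card_otherInOrbit (x : Fin n) :
    ((otherInOrbit part x).card : ℝ) = orbCard part (part x) - 1 := by
  have hx : x ∈ Finset.univ.filter (fun z => part z = part x) := by simp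
  have : otherInOrbit part x = (Finset.univ.filter (fun z => part z = part x)).erase x := by
    ext z
    simp [otherInOrbit, and_comm]
  rw [this, Finset.card_erase_of_mem hx, Nat.cast_sub (Finset.card_pos.mpr ⟨x, hx⟩), Nat.cast_one]
  rfl

/-- Propose a uniform other point of the orbit, accept the move `x → y` with probability `a x y`:
`mhKer` and `barkerKer` are the cases `a x y = min 1 (π y / π x)` and `π y / (π x + π y)`. -/
noncomputable def uniformProposalKer (part : Fin n → Fin k) (a : Fin n → Fin n → ℝ) :
    Matrix (Fin n) (Fin n) ℝ :=
  Matrix.of fun x y =>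
    if x = y then 1 - ∑ z ∈ otherInOrbit part x, a x z / ((orbCard part (part x) : ℝ) - 1)
    else if part y = part x then a x y / ((orbCard part (part x) : ℝ) - 1)
    else 0

variable {a : Fin n → Fin n → ℝ}

theorem uniformProposalKer_self (x : Fin n) :
    uniformProposalKer part a x x =
      1 - (∑ z ∈ otherInOrbit part x, a x z) / (otherInOrbit part x).card := by
  simp [uniformProposalKer, Finset.sum_div, card_otherInOrbit]

theorem uniformProposalKer_of_ne {x y : Fin n} (hxy : x ≠ y) (h : part y = part x) :
    uniformProposalKer part a x y = a x y / ((orbCard part (part x) : ℝ) - 1) := by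
  simp [uniformProposalKer, hxy, h]

theorem uniformProposalKer_of_part_ne {x y : Fin n} (h : part y ≠ part x) :
    uniformProposalKer part a x y = 0 := by
  have hxy : x ≠ y := by rintro rfl; exact h rfl
  simp [uniformProposalKer, hxy, h]

theorem sum_uniformProposalKer (x : Fin n) : ∑ y, uniformProposalKer part a x y = 1 := by
  have hoff : ∑ y ∈ Finset.univ.erase x, uniformProposalKer part a x y =
      ∑ y ∈ otherInOrbit part x, a x y / ((orbCard part (part x) : ℝ) - 1) := by
    have : otherInOrbit part x = (Finset.univ.erase x).filter (fun z => part z = part x) := by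
      ext z
      simp [otherInOrbit]
    rw [this, Finset.sum_filter]
    refine Finset.sum_congr rfl fun y hy => ?_
    have hxy : x ≠ y := (Finset.ne_of_mem_erase hy).symm
    split_ifs with h
    exacts [uniformProposalKer_of_ne hxy h, uniformProposalKer_of_part_ne h]
  rw [← Finset.add_sum_erase _ _ (Finset.mem_univ x), hoff]
  simp [uniformProposalKer]

theorem uniformProposalKer_self_pos {x : Fin n} (h : ∀ z ∈ otherInOrbit part x, a x z < 1) :
    0 < uniformProposalKer part a x x := by
  rw [uniformProposalKer_self, sub_pos]
  exact sum_div_card_lt_one h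

theorem isOrbitKernel_uniformProposalKer (ha_pos : ∀ x y, 0 < a x y) (ha_le : ∀ x y, a x y ≤ 1)
    (ha_rev : ∀ x y, π x * a x y = π y * a y x)
    (hloop : ∀ x, (∃ y, part y = part x ∧ ∀ z ∈ otherInOrbit part y, a y z < 1) ∨
      2 < orbCard part (part x)) :
    IsOrbitKernel π part (uniformProposalKer part a) := by
  have hpos : ∀ x y, x ≠ y → part y = part x → 0 < uniformProposalKer part a x y := by
    intro x y hxy h
    have hy : y ∈ otherInOrbit part x := mem_otherInOrbit.mpr ⟨Ne.symm hxy, h⟩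
    rw [uniformProposalKer_of_ne hxy h, ← card_otherInOrbit]
    exact div_pos (ha_pos x y) (by exact_mod_cast Finset.card_pos.mpr ⟨y, hy⟩)
  refine ⟨fun x y => ?_, sum_uniformProposalKer, fun x y => uniformProposalKer_of_part_ne, hpos,
    fun x y => ?_, fun x => ?_⟩
  · rcases eq_or_ne x y with rfl | hxy
    · rw [uniformProposalKer_self, sub_nonneg]
      exact sum_div_card_le_one fun z _ => ha_le x z
    by_cases h : part y = part x
    · exact (hpos x y hxy h).le
    · exact (uniformProposalKer_of_part_ne h).ge
  · rcases eq_or_ne x y with rfl | hxy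
    · rfl
    by_cases h : part y = part x
    · rw [uniformProposalKer_of_ne hxy h, uniformProposalKer_of_ne (Ne.symm hxy) h.symm, h,
        mul_div_assoc', mul_div_assoc', ha_rev]
    · rw [uniformProposalKer_of_part_ne h, uniformProposalKer_of_part_ne (Ne.symm h),
        mul_zero, mul_zero]
  · exact (hloop x).imp (fun ⟨y, hyx, hy⟩ => ⟨y, hyx, uniformProposalKer_self_pos hy⟩) id

theorem isOrbitKernel_mhKer (hπ : ∀ x, 0 < π x)
    (hns : ¬ ∃ x y : Fin n, x ≠ y ∧ part x = part y ∧ orbCard part (part x) = 2 ∧ π x = π y) :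
    IsOrbitKernel π part (mhKer π part) := by
  refine isOrbitKernel_uniformProposalKer (a := fun x y => min 1 (π y / π x))
    (fun x y => lt_min one_pos (div_pos (hπ y) (hπ x))) (fun x y => min_le_left _ _)
    (fun x y => ?_) (fun x => ?_)
  · rw [mul_min_of_nonneg _ _ (hπ x).le, mul_min_of_nonneg _ _ (hπ y).le,
      mul_div_cancel₀ _ (hπ x).ne', mul_div_cancel₀ _ (hπ y).ne', mul_one, mul_one, min_comm]
  by_cases h3 : 2 < orbCard part (part x)
  · exact Or.inr h3
  -- in an orbit of at most two points, a point of largest mass rejects with positive probability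
  obtain ⟨y, hy, hmax⟩ := Finset.exists_max_image
    (Finset.univ.filter (fun z => part z = part x)) π ⟨x, by simp⟩
  have hyx : part y = part x := (Finset.mem_filter.mp hy).2
  refine Or.inl ⟨y, hyx, fun z hz => ?_⟩
  obtain ⟨hzy, hzp⟩ := mem_otherInOrbit.mp hz
  have hcard : orbCard part (part z) = 2 := by
    refine le_antisymm (not_lt.mp (by rwa [hzp, hyx])) (Finset.one_lt_card.mpr ?_)
    exact ⟨z, by simp, y, by simp [hzp], hzy⟩
  have hlt : π z < π y :=
    (hmax z (by simp [hzp, hyx])).lt_of_ne fun heq => hns ⟨z, y, hzy, hzp, hcard, heq⟩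
  exact (min_le_right _ _).trans_lt ((div_lt_one (hπ y)).mpr hlt)

theorem isOrbitKernel_barkerKer (hπ : ∀ x, 0 < π x) :
    IsOrbitKernel π part (barkerKer π part) := by
  have hsum : ∀ x y, 0 < π x + π y := fun x y => add_pos (hπ x) (hπ y)
  have hlt : ∀ x y, π y / (π x + π y) < 1 := fun x y =>
    (div_lt_one (hsum x y)).mpr (lt_add_of_pos_left _ (hπ x))
  refine isOrbitKernel_uniformProposalKer (a := fun x y => π y / (π x + π y))
    (fun x y => div_pos (hπ y) (hsum x y)) (fun x y => (hlt x y).le) (fun x y => ?_)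
    (fun x => Or.inl ⟨x, rfl, fun z _ => hlt x z⟩)
  rw [add_comm (π y)]
  ring

end GibbsMetropolisBarker

theorem stmt9_general {n k : ℕ}
    (π : Fin n → ℝ) (hπpos : ∀ x, 0 < π x)
    (part : Fin n → Fin k)
    (hns : ¬ ∃ x y : Fin n, x ≠ y ∧ part x = part y ∧ orbCard part (part x) = 2 ∧ π x = π y) :
    ∀ P : Matrix (Fin n) (Fin n) ℝ,
      (∀ x y, 0 ≤ P x y) → (∀ x, ∑ y, P x y = 1) → (∀ y, ∑ x, π x * P x y = π y) →
      ((gibbsKer π part * P * gibbsKer π part = P ↔ mhKer π part * P * mhKer π part = P) ∧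
       (gibbsKer π part * P * gibbsKer π part = P ↔
          barkerKer π part * P * barkerKer π part = P)) := by
  intro P _ _ _
  have hG := isOrbitKernel_gibbsKer (part := part) hπpos
  exact ⟨hG.mul_mul_eq_self_iff_of_isOrbitKernel (isOrbitKernel_mhKer hπpos hns) hπpos P,
    hG.mul_mul_eq_self_iff_of_isOrbitKernel (isOrbitKernel_barkerKer hπpos) hπpos P⟩

/-- if no orbit is a two-element set with equal `π`-masses, then for every
`π`-stationary stochastic `P`, the conditions `GPG = P`, `MPM = P`, `BPB = P` are
equivalent, i.e. the invariant sets 𝐆, 𝐌, 𝐁 coincide. -/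
theorem stmt9 {n k : ℕ} (hn : 0 < n)
    (π : Fin n → ℝ) (hπpos : ∀ x, 0 < π x) (hπsum : ∑ x, π x = 1)
    (part : Fin n → Fin k) (hpart : Function.Surjective part)
    (hns : ¬ ∃ x y : Fin n, x ≠ y ∧ part x = part y ∧ orbCard part (part x) = 2 ∧ π x = π y) :
    ∀ P : Matrix (Fin n) (Fin n) ℝ,
      (∀ x y, 0 ≤ P x y) → (∀ x, ∑ y, P x y = 1) → (∀ y, ∑ x, π x * P x y = π y) →
      ((gibbsKer π part * P * gibbsKer π part = P ↔ mhKer π part * P * mhKer π part = P) ∧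
       (gibbsKer π part * P * gibbsKer π part = P ↔
          barkerKer π part * P * barkerKer π part = P)) :=
  stmt9_general π hπpos part hns
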